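/- arXiv:2603.29973 — 2 statements merged into one kernel-verified Lean document; each statement's English description precedes it below -/
import Mathlib

section
/- The series \sum_{k=1}^{\infty} 1/(k \binom{2k}{k}) converges to \pi/(3\sqrt{3}). -/
/-!
The `k`-th term is the Beta integral `∫₀¹ xᵏ (1 - x)ᵏ⁺¹ dx = k! (k+1)! / (2k+2)!`. Since
`x (1 - x) ≤ 1/4` on `[0, 1]`, the geometric series may be summed under the integral, giving
`∫₀¹ (1 - x) / (x² - x + 1) dx`, which is `π / (3√3)` via an arctan–log antiderivative.
-/

open Real Set MeasureTheory
open scoped Nat Interval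

theorem integral_pow_mul_one_sub_pow (m n : ℕ) :
    ∫ x in (0 : ℝ)..1, x ^ m * (1 - x) ^ n = (m ! * n ! : ℝ) / (m + n + 1)! := by
  have hpos : ∀ k : ℕ, 0 < ((k : ℂ) + 1).re := fun k => by simp; positivity
  have hΓ := Complex.Gamma_mul_Gamma_eq_betaIntegral (hpos m) (hpos n)
  rw [show (m : ℂ) + 1 + (n + 1) = ((m + n + 1 : ℕ) : ℂ) + 1 by push_cast; ring] at hΓ
  simp only [Complex.Gamma_nat_eq_factorial] at hΓ
  have hB : Complex.betaIntegral (m + 1) (n + 1)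
      = ((∫ x in (0 : ℝ)..1, x ^ m * (1 - x) ^ n : ℝ) : ℂ) := by
    rw [Complex.betaIntegral, ← intervalIntegral.integral_ofReal]
    refine intervalIntegral.integral_congr fun x _ => ?_
    simp only [add_sub_cancel_right, Complex.cpow_natCast]
    push_cast
    ring
  rw [hB] at hΓ
  rw [eq_div_iff (by positivity)]
  apply Complex.ofReal_injective
  push_cast
  linear_combination -hΓ

theorem integral_pow_mul_one_sub_pow_succ (k : ℕ) :
    ∫ x in (0 : ℝ)..1, x ^ k * (1 - x) ^ (k + 1)
      = 1 / (((k + 1 : ℕ) : ℝ) * ((2 * (k + 1)).choose (k + 1) : ℝ)) := by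
  have h := Nat.add_choose_mul_factorial_mul_factorial (k + 1) (k + 1)
  rw [← two_mul] at h
  rw [integral_pow_mul_one_sub_pow, show k + (k + 1) + 1 = 2 * (k + 1) by ring, ← h,
    Nat.factorial_succ k]
  push_cast
  field_simp

theorem hasSum_pow_mul_one_sub_pow_succ {x : ℝ} (hx : x ∈ Icc (0 : ℝ) 1) :
    HasSum (fun k : ℕ => x ^ k * (1 - x) ^ (k + 1)) ((1 - x) / (x ^ 2 - x + 1)) := by
  obtain ⟨hx0, hx1⟩ := hx
  have hterm : ∀ k : ℕ, x ^ k * (1 - x) ^ (k + 1) = (1 - x) * (x * (1 - x)) ^ k := fun k => by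
    rw [pow_succ, mul_pow]; ring
  have hsum : (1 - x) / (x ^ 2 - x + 1) = (1 - x) * (1 - x * (1 - x))⁻¹ := by
    rw [div_eq_mul_inv]; ring
  simp_rw [hterm, hsum]
  exact (hasSum_geometric_of_lt_one (by positivity) (by nlinarith)).mul_left (1 - x)

theorem norm_pow_mul_one_sub_pow_succ_le {x : ℝ} (hx : x ∈ Icc (0 : ℝ) 1) (k : ℕ) :
    ‖x ^ k * (1 - x) ^ (k + 1)‖ ≤ (1 / 4) ^ k := by
  obtain ⟨hx0, hx1⟩ := hx
  have hx1' : 0 ≤ 1 - x := by linarith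
  rw [Real.norm_of_nonneg (by positivity)]
  calc x ^ k * (1 - x) ^ (k + 1) = (x * (1 - x)) ^ k * (1 - x) := by rw [mul_pow]; ring
    _ ≤ (1 / 4) ^ k * 1 := by gcongr <;> nlinarith [sq_nonneg (2 * x - 1)]
    _ = (1 / 4) ^ k := mul_one _

theorem sq_sub_self_add_one_pos (x : ℝ) : 0 < x ^ 2 - x + 1 := by
  nlinarith [sq_nonneg (2 * x - 1)]

theorem hasDerivAt_arctan_div_sqrt_three_sub_log (x : ℝ) :
    HasDerivAt (fun x => arctan ((2 * x - 1) / √3) / √3 - log (x ^ 2 - x + 1) / 2)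
      ((1 - x) / (x ^ 2 - x + 1)) x := by
  have hq : HasDerivAt (fun x : ℝ => x ^ 2 - x + 1) (2 * x - 1) x := by
    simpa using ((hasDerivAt_pow 2 x).sub (hasDerivAt_id x)).add_const 1
  have hlin : HasDerivAt (fun x : ℝ => (2 * x - 1) / √3) (2 / √3) x := by
    simpa using (((hasDerivAt_id x).const_mul 2).sub_const 1).div_const √3
  refine ((hlin.arctan.div_const √3).sub
    ((hq.log (sq_sub_self_add_one_pos x).ne').div_const 2)).congr_deriv ?_
  have hq_pos := sq_sub_self_add_one_pos x
  have hden : 1 + ((2 * x - 1) / √3) ^ 2 = 4 * (x ^ 2 - x + 1) / 3 := by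
    rw [div_pow, sq_sqrt zero_le_three]; ring
  rw [hden]
  field_simp
  rw [sq_sqrt zero_le_three]
  ring

theorem integral_one_sub_div_sq_sub_self_add_one :
    ∫ x in (0 : ℝ)..1, (1 - x) / (x ^ 2 - x + 1) = π / (3 * √3) := by
  have hcont : Continuous fun x : ℝ => (1 - x) / (x ^ 2 - x + 1) :=
    (by fun_prop : Continuous fun x : ℝ => 1 - x).div (by fun_prop)
      fun x => (sq_sub_self_add_one_pos x).ne'
  rw [intervalIntegral.integral_eq_sub_of_hasDerivAt
    (fun x _ => hasDerivAt_arctan_div_sqrt_three_sub_log x) (hcont.intervalIntegrable 0 1)]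
  norm_num
  rw [neg_div, arctan_neg, one_div, arctan_inv_sqrt_three]
  ring

theorem stmt_3 :
    HasSum (fun k : ℕ =>
      1 / (((k + 1 : ℕ) : ℝ) * (Nat.choose (2 * (k + 1)) (k + 1) : ℝ)))
      (π / (3 * Real.sqrt 3)) := by
  have hIcc : ∀ x ∈ Ι (0 : ℝ) 1, x ∈ Icc (0 : ℝ) 1 := fun x hx =>
    Ioc_subset_Icc_self (by rwa [uIoc_of_le zero_le_one] at hx)
  have h := intervalIntegral.hasSum_integral_of_dominated_convergence
    (F := fun (k : ℕ) (x : ℝ) => x ^ k * (1 - x) ^ (k + 1))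
    (f := fun x => (1 - x) / (x ^ 2 - x + 1)) (μ := volume) (a := 0) (b := 1)
    (fun k _ => (1 / 4 : ℝ) ^ k) (fun k => by fun_prop)
    (fun k => ae_of_all _ fun x hx => norm_pow_mul_one_sub_pow_succ_le (hIcc x hx) k)
    (ae_of_all _ fun _ _ => summable_geometric_of_lt_one (by norm_num) (by norm_num))
    intervalIntegrable_const
    (ae_of_all _ fun x hx => hasSum_pow_mul_one_sub_pow_succ (hIcc x hx))
  simpa only [integral_pow_mul_one_sub_pow_succ, integral_one_sub_div_sq_sub_self_add_one] using h
end

section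
/- The series \sum_{k=1}^{\infty} \frac{H_{k-1}^{(2)}}{k^2 \binom{2k}{k}} converges to \pi^4/1944. -/
/-!
For `0 ≤ θ ≤ π/6` the classical expansions
`2θ² = ∑_{k≥1} (2 sin θ)^{2k} / (k² C(2k,k))` and
`2θ⁴/3 = ∑_{k≥1} H_{k-1}^{(2)} (2 sin θ)^{2k} / (k² C(2k,k))`
hold; at `θ = π/6` we have `2 sin θ = 1`, and the second one gives `2(π/6)⁴/3 = π⁴/1944`.

They are proved through their truncations, without power series. Let
`e_k = (2 sin θ)^{2k} / C(2k,k)`. Since `(k+1) C(2k+2,k+1) = 2(2k+1) C(2k,k)`, the function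
`o_k = (2 sin θ)^{2k+1} cos θ / ((k+1) C(2k+2,k+1))` has derivative `e_k - e_{k+1}`, while
`e_{k+1}' = 4(k+1)² o_k`. So the truncations `P = ∑_{k<n} o_k`, `Q = ∑_{k<n} e_{k+1}/(k+1)²`,
`R = ∑_{k<n} H_k o_k`, `Z = ∑_{k<n} H_k e_{k+1}/(k+1)²` vanish at `0` and satisfy
`P' = 1 - e_n`, `Q' = 4P`, `R' = Q - H_n e_n` (summation by parts) and `Z' = 4R`.
On `[0, π/6]` we have `0 ≤ e_n ≤ 1/C(2n,n)`, so the mean value inequality, applied four times,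
bounds the distance of `P, Q, R, Z` to `θ, 2θ², 2θ³/3, 2θ⁴/3` by multiples of `1/C(2n,n) → 0`.
-/

open Real

/-- The `n`-th harmonic number of order 2: `H_n^{(2)} = ∑_{j=1}^n 1/j^2`. -/
noncomputable def harmonic2 (n : ℕ) : ℝ := ∑ j ∈ Finset.range n, 1 / ((j : ℝ) + 1) ^ 2

open Finset Filter Topology Set

lemma harmonic2_succ (n : ℕ) : harmonic2 (n + 1) = harmonic2 n + 1 / ((n : ℝ) + 1) ^ 2 :=
  sum_range_succ _ _

lemma harmonic2_nonneg (n : ℕ) : 0 ≤ harmonic2 n := by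
  unfold harmonic2; positivity

lemma harmonic2_le_pi_sq_div_six (n : ℕ) : harmonic2 n ≤ π ^ 2 / 6 := by
  have h := sum_le_hasSum (range (n + 1)) (fun j _ => by positivity) hasSum_zeta_two
  simpa [sum_range_succ', harmonic2] using h

lemma pi_div_six_le_one : π / 6 ≤ 1 := by linarith [pi_le_four]

lemma abs_le_of_hasDerivAt_of_abs_le {f f' : ℝ → ℝ} {a C : ℝ} (ha : a ≤ 1)
    (hf : ∀ x, HasDerivAt f (f' x) x) (h0 : f 0 = 0) (hC : ∀ x ∈ Icc 0 a, |f' x| ≤ C)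
    {x : ℝ} (hx : x ∈ Icc 0 a) : |f x| ≤ C := by
  have hC0 : 0 ≤ C := (abs_nonneg _).trans (hC x hx)
  have h := (convex_Icc 0 a).norm_image_sub_le_of_norm_hasDerivWithin_le
    (fun y _ => (hf y).hasDerivWithinAt) hC ⟨le_rfl, hx.1.trans hx.2⟩ hx
  simp only [h0, sub_zero, Real.norm_eq_abs, abs_of_nonneg hx.1] at h
  exact h.trans (mul_le_of_le_one_right hC0 (hx.2.trans ha))

namespace CentralBinomSeries

noncomputable def evenTerm (k : ℕ) (θ : ℝ) : ℝ := (2 * sin θ) ^ (2 * k) / k.centralBinom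

noncomputable def oddTerm (k : ℕ) (θ : ℝ) : ℝ :=
  (2 * sin θ) ^ (2 * k + 1) * cos θ / ((k + 1) * (k + 1).centralBinom)

lemma hasDerivAt_evenTerm_succ (k : ℕ) (θ : ℝ) :
    HasDerivAt (evenTerm (k + 1)) (4 * ((k : ℝ) + 1) ^ 2 * oddTerm k θ) θ := by
  have h : HasDerivAt (fun x => (2 * sin x) ^ (2 * (k + 1)) / ((k + 1).centralBinom : ℝ)) _ θ :=
    (((hasDerivAt_sin θ).const_mul 2).pow _).div_const _
  refine h.congr_deriv ?_
  have := Nat.cast_ne_zero (R := ℝ) |>.mpr (k + 1).centralBinom_ne_zero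
  rw [oddTerm, show 2 * (k + 1) - 1 = 2 * k + 1 by omega]
  field_simp
  push_cast
  ring

lemma hasDerivAt_oddTerm (k : ℕ) (θ : ℝ) :
    HasDerivAt (oddTerm k) (evenTerm k θ - evenTerm (k + 1) θ) θ := by
  have h : HasDerivAt (fun x => (2 * sin x) ^ (2 * k + 1) * cos x /
      (((k : ℝ) + 1) * (k + 1).centralBinom)) _ θ :=
    ((((hasDerivAt_sin θ).const_mul 2).pow _).mul (hasDerivAt_cos θ)).div_const _
  refine h.congr_deriv ?_
  have hrec : ((k + 1).centralBinom : ℝ) = 2 * (2 * k + 1) * k.centralBinom / (k + 1) := by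
    rw [eq_div_iff (by positivity), mul_comm]
    exact_mod_cast Nat.succ_mul_centralBinom_succ k
  have := Nat.cast_ne_zero (R := ℝ) |>.mpr k.centralBinom_ne_zero
  rw [evenTerm, evenTerm, hrec, show 2 * k + 1 - 1 = 2 * k by omega, Pi.pow_apply]
  field_simp
  push_cast
  linear_combination 2 * (2 * (k : ℝ) + 1) * (2 * sin θ) ^ (2 * k) * sin_sq_add_cos_sq θ

noncomputable def oddSum (a : ℕ → ℝ) (n : ℕ) (θ : ℝ) : ℝ :=
  ∑ k ∈ range n, a k * oddTerm k θ

noncomputable def evenSum (a : ℕ → ℝ) (n : ℕ) (θ : ℝ) : ℝ :=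
  ∑ k ∈ range n, a k * evenTerm (k + 1) θ / ((k : ℝ) + 1) ^ 2

lemma oddSum_zero_right (a : ℕ → ℝ) (n : ℕ) : oddSum a n 0 = 0 := by
  simp [oddSum, oddTerm]

lemma evenSum_zero_right (a : ℕ → ℝ) (n : ℕ) : evenSum a n 0 = 0 := by
  simp [evenSum, evenTerm]

lemma hasDerivAt_evenSum (a : ℕ → ℝ) (n : ℕ) (θ : ℝ) :
    HasDerivAt (evenSum a n) (4 * oddSum a n θ) θ := by
  have h : HasDerivAt (evenSum a n) (∑ k ∈ range n,
      a k * (4 * ((k : ℝ) + 1) ^ 2 * oddTerm k θ) / ((k : ℝ) + 1) ^ 2) θ :=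
    HasDerivAt.fun_sum fun k _ => ((hasDerivAt_evenTerm_succ k θ).const_mul (a k)).div_const _
  refine h.congr_deriv ?_
  rw [oddSum, mul_sum]
  refine sum_congr rfl fun k _ => ?_
  field_simp

lemma hasDerivAt_oddSum (a : ℕ → ℝ) (n : ℕ) (θ : ℝ) :
    HasDerivAt (oddSum a n) (∑ k ∈ range n, a k * (evenTerm k θ - evenTerm (k + 1) θ)) θ :=
  HasDerivAt.fun_sum fun k _ => (hasDerivAt_oddTerm k θ).const_mul (a k)

lemma hasDerivAt_oddSum_one (n : ℕ) (θ : ℝ) :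
    HasDerivAt (oddSum 1 n) (1 - evenTerm n θ) θ := by
  refine (hasDerivAt_oddSum 1 n θ).congr_deriv ?_
  simp only [Pi.one_apply, one_mul]
  rw [sum_range_sub' (evenTerm · θ), evenTerm]
  simp

lemma hasDerivAt_oddSum_harmonic2 (n : ℕ) (θ : ℝ) :
    HasDerivAt (oddSum harmonic2 n) (evenSum 1 n θ - harmonic2 n * evenTerm n θ) θ := by
  refine (hasDerivAt_oddSum harmonic2 n θ).congr_deriv ?_
  induction n with
  | zero => simp [evenSum, harmonic2]
  | succ n ih =>
    rw [sum_range_succ, ih, evenSum, evenSum, sum_range_succ, harmonic2_succ, Pi.one_apply]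
    ring

lemma abs_evenTerm_le (n : ℕ) {θ : ℝ} (hθ : θ ∈ Icc 0 (π / 6)) :
    |evenTerm n θ| ≤ (n.centralBinom : ℝ)⁻¹ := by
  have hsin_nonneg : 0 ≤ sin θ :=
    sin_nonneg_of_nonneg_of_le_pi hθ.1 (by linarith [hθ.2, pi_pos])
  have hsin_le : sin θ ≤ 1 / 2 := by
    rw [← sin_pi_div_six]
    exact sin_le_sin_of_le_of_le_pi_div_two (by linarith [hθ.1, pi_pos]) (by linarith [pi_pos])
      hθ.2
  rw [evenTerm, abs_of_nonneg (by positivity), div_eq_mul_inv]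
  exact mul_le_of_le_one_left (by positivity) (pow_le_one₀ (by positivity) (by linarith))

variable {n : ℕ} {θ : ℝ}

lemma abs_sub_oddSum_one_le (hθ : θ ∈ Icc 0 (π / 6)) :
    |θ - oddSum 1 n θ| ≤ (n.centralBinom : ℝ)⁻¹ := by
  refine abs_le_of_hasDerivAt_of_abs_le pi_div_six_le_one
    (fun x => ((hasDerivAt_id x).sub (hasDerivAt_oddSum_one n x)).congr_deriv (sub_sub_cancel _ _))
    (by simp [oddSum_zero_right]) (fun x hx => abs_evenTerm_le n hx) hθ

lemma abs_sub_evenSum_one_le (hθ : θ ∈ Icc 0 (π / 6)) :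
    |2 * θ ^ 2 - evenSum 1 n θ| ≤ 4 * (n.centralBinom : ℝ)⁻¹ := by
  refine abs_le_of_hasDerivAt_of_abs_le (f' := fun x => 4 * (x - oddSum 1 n x)) pi_div_six_le_one
    (fun x => (((hasDerivAt_pow 2 x).const_mul 2).sub (hasDerivAt_evenSum 1 n x)).congr_deriv ?_)
    (by simp [evenSum_zero_right]) (fun x hx => ?_) hθ
  · push_cast
    ring
  · rw [abs_mul, abs_of_pos four_pos]
    exact mul_le_mul_of_nonneg_left (abs_sub_oddSum_one_le hx) zero_le_four

lemma abs_sub_oddSum_harmonic2_le (hθ : θ ∈ Icc 0 (π / 6)) :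
    |2 * θ ^ 3 / 3 - oddSum harmonic2 n θ| ≤
      (4 + π ^ 2 / 6) * (n.centralBinom : ℝ)⁻¹ := by
  refine abs_le_of_hasDerivAt_of_abs_le
    (f' := fun x => (2 * x ^ 2 - evenSum 1 n x) + harmonic2 n * evenTerm n x) pi_div_six_le_one
    (fun x => (((hasDerivAt_pow 3 x).const_mul 2).div_const 3 |>.sub
      (hasDerivAt_oddSum_harmonic2 n x)).congr_deriv ?_)
    (by simp [oddSum_zero_right]) (fun x hx => ?_) hθ
  · push_cast
    ring
  · calc |(2 * x ^ 2 - evenSum 1 n x) + harmonic2 n * evenTerm n x|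
        ≤ |2 * x ^ 2 - evenSum 1 n x| + harmonic2 n * |evenTerm n x| :=
          (abs_add_le _ _).trans_eq (by rw [abs_mul, abs_of_nonneg (harmonic2_nonneg n)])
      _ ≤ 4 * (n.centralBinom : ℝ)⁻¹ + π ^ 2 / 6 * (n.centralBinom : ℝ)⁻¹ := by
          gcongr
          · exact abs_sub_evenSum_one_le hx
          · exact harmonic2_le_pi_sq_div_six n
          · exact abs_evenTerm_le n hx
      _ = _ := by ring

lemma abs_sub_evenSum_harmonic2_le (hθ : θ ∈ Icc 0 (π / 6)) :
    |2 * θ ^ 4 / 3 - evenSum harmonic2 n θ| ≤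
      4 * (4 + π ^ 2 / 6) * (n.centralBinom : ℝ)⁻¹ := by
  refine abs_le_of_hasDerivAt_of_abs_le
    (f' := fun x => 4 * (2 * x ^ 3 / 3 - oddSum harmonic2 n x)) pi_div_six_le_one
    (fun x => (((hasDerivAt_pow 4 x).const_mul 2).div_const 3 |>.sub
      (hasDerivAt_evenSum harmonic2 n x)).congr_deriv ?_)
    (by simp [evenSum_zero_right]) (fun x hx => ?_) hθ
  · push_cast
    ring
  · rw [abs_mul, abs_of_pos four_pos, mul_assoc]
    exact mul_le_mul_of_nonneg_left (abs_sub_oddSum_harmonic2_le hx) zero_le_four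

lemma tendsto_evenSum_harmonic2 (hθ : θ ∈ Icc 0 (π / 6)) :
    Tendsto (fun n => evenSum harmonic2 n θ) atTop (𝓝 (2 * θ ^ 4 / 3)) := by
  have hC : Tendsto (fun n : ℕ => (n.centralBinom : ℝ)⁻¹) atTop (𝓝 0) :=
    tendsto_inv_atTop_zero.comp
      (tendsto_natCast_atTop_atTop.comp Nat.centralBinom_strictMono.tendsto_atTop)
  rw [tendsto_iff_norm_sub_tendsto_zero]
  refine squeeze_zero (fun n => norm_nonneg _) (fun n => ?_)
    (by simpa using hC.const_mul (4 * (4 + π ^ 2 / 6)))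
  rw [norm_sub_rev]
  exact abs_sub_evenSum_harmonic2_le hθ

lemma evenSum_harmonic2_pi_div_six (n : ℕ) :
    evenSum harmonic2 n (π / 6) =
      ∑ k ∈ range n, harmonic2 k / (((k + 1 : ℕ) : ℝ) ^ 2 * ((k + 1).centralBinom : ℝ)) := by
  refine sum_congr rfl fun k _ => ?_
  rw [evenTerm, sin_pi_div_six]
  push_cast
  field_simp
  norm_num

end CentralBinomSeries

open CentralBinomSeries

theorem stmt_9 :
    HasSum (fun k : ℕ =>
      harmonic2 k /
        (((k + 1 : ℕ) : ℝ) ^ 2 * (Nat.choose (2 * (k + 1)) (k + 1) : ℝ)))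
      (π ^ 4 / 1944) := by
  rw [hasSum_iff_tendsto_nat_of_nonneg fun k =>
    div_nonneg (harmonic2_nonneg k) (by positivity)]
  have h := tendsto_evenSum_harmonic2 (θ := π / 6) ⟨by positivity, le_rfl⟩
  simp only [evenSum_harmonic2_pi_div_six] at h
  rw [show π ^ 4 / 1944 = 2 * (π / 6) ^ 4 / 3 by ring]
  exact h
end
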